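/- arXiv:1403.6080 — 2 statements merged into one kernel-verified Lean document; each statement's English description precedes it below -/
import Mathlib

section
/- Let m ≥ 1 and let M₁, …, M_m be N×N complex matrices. Let Z be the mN×mN cyclic block matrix built from M₁, …, M_m. Then for every x ∈ ℂ, det(x I_{mN} − Z^m) = (det(x I_N − M₁ M₂ ⋯ M_m))^m; in particular the eigenvalue multiset of Z^m consists of m copies of the eigenvalue multiset of M₁ ⋯ M_m. -/
open MeasureTheory ProbabilityTheory Filter Topology Matrix
open scoped ENNReal NNReal

noncomputable section

namespace Paper

/-- Matrices inherit the product measurable structure. -/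
instance matrixMeasurableSpace {k l R : Type*} [MeasurableSpace R] :
    MeasurableSpace (Matrix k l R) :=
  inferInstanceAs (MeasurableSpace (k → l → R))

/-- The ordered product `M 0 * M 1 * ⋯ * M (m-1)` of matrices. -/
def ordProd {α : Type*} [Ring α] {n : Type*} [Fintype n] [DecidableEq n] {m : ℕ}
    (M : Fin m → Matrix n n α) : Matrix n n α :=
  (List.ofFn M).prod

/-- The `mN × mN` cyclic block matrix with `(k, k+1)` block `M k` (cyclically). -/
def cyclicBlock {α : Type*} [Zero α] {m N : ℕ} (M : Fin m → Matrix (Fin N) (Fin N) α) :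
    Matrix (Fin m × Fin N) (Fin m × Fin N) α :=
  fun p q => if q.1.val = (p.1.val + 1) % m then M p.1 p.2 q.2 else 0

/-- Complexification of a real matrix. -/
def matC {k l : Type*} (M : Matrix k l ℝ) : Matrix k l ℂ := M.map (fun x => (x : ℂ))

/-- Empirical spectral measure of a square complex matrix: the uniform probability measure
on the eigenvalues (roots of the characteristic polynomial), with multiplicity. -/
def espec {n : Type*} [Fintype n] [DecidableEq n] (M : Matrix n n ℂ) : Measure ℂ :=
  ((Fintype.card n : ℝ≥0∞))⁻¹ • ((M.charpoly.roots.map Measure.dirac).sum)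

/-- The measure `F_m` on `ℂ`, with density `(mπ)⁻¹ |z|^{2/m-2}` on the unit disk. -/
def Fm (m : ℕ) : Measure ℂ :=
  volume.withDensity fun z =>
    if ‖z‖ ≤ 1 then
      ENNReal.ofReal (((m : ℝ) * Real.pi)⁻¹ * ‖z‖ ^ ((2 : ℝ) / m - 2))
    else 0

/-- The circular law: uniform probability measure on the closed unit disk. -/
def circLaw : Measure ℂ :=
  (ENNReal.ofReal Real.pi)⁻¹ • volume.restrict {z : ℂ | ‖z‖ ≤ 1}

/-- Index type for the independent entries of an elliptic random matrix. -/
abbrev EIdx (N : ℕ) := Fin N ⊕ {p : Fin N × Fin N // p.1 < p.2}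

/-- Value type of each coordinate. -/
def EType (N : ℕ) : EIdx N → Type := fun k => Sum.rec (fun _ => ℝ) (fun _ => ℝ × ℝ) k

instance (N : ℕ) (k : EIdx N) : MeasurableSpace (EType N k) := by
  cases k <;> · dsimp [EType]; infer_instance

/-- The family of diagonal entries and off-diagonal mirror pairs of a random matrix. -/
def entryFam {Ω : Type*} {N : ℕ} (Y : Ω → Matrix (Fin N) (Fin N) ℝ) :
    (k : EIdx N) → Ω → EType N k
  | Sum.inl i => fun ω => Y ω i i
  | Sum.inr p => fun ω => (Y ω p.1.1 p.1.2, Y ω p.1.2 p.1.1)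

/-- `Y` is a real elliptic random matrix with atom variables `(ξ, ζ)`. -/
structure IsElliptic {Ω : Type*} [MeasurableSpace Ω] (P : Measure Ω) {N : ℕ}
    (ξ : Ω → ℝ × ℝ) (ζ : Ω → ℝ) (Y : Ω → Matrix (Fin N) (Fin N) ℝ) : Prop where
  meas : ∀ i j, Measurable fun ω => Y ω i j
  indep : iIndepFun (entryFam Y) P
  offdiag_dist : ∀ i j : Fin N, i < j →
    Measure.map (fun ω => (Y ω i j, Y ω j i)) P = Measure.map ξ P
  diag_dist : ∀ i : Fin N, Measure.map (fun ω => Y ω i i) P = Measure.map ζ P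

/-- Assumption (A) on the atom variables, with moment exponent `τ`. -/
structure AssumptionA {Ω : Type*} [MeasurableSpace Ω] (P : Measure Ω)
    (ξ : Ω → ℝ × ℝ) (ζ : Ω → ℝ) (τ : ℝ) : Prop where
  tau_pos : 0 < τ
  meas : Measurable ξ
  meas_diag : Measurable ζ
  mean_fst : ∫ ω, (ξ ω).1 ∂P = 0
  mean_snd : ∫ ω, (ξ ω).2 ∂P = 0
  var_fst : ∫ ω, (ξ ω).1 ^ 2 ∂P = 1
  var_snd : ∫ ω, (ξ ω).2 ^ 2 ∂P = 1
  moment : (∫⁻ ω, ENNReal.ofReal (|(ξ ω).1| ^ (2 + τ)) ∂P)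
      + (∫⁻ ω, ENNReal.ofReal (|(ξ ω).2| ^ (2 + τ)) ∂P) < ⊤
  corr_lt_one : |∫ ω, (ξ ω).1 * (ξ ω).2 ∂P| < 1
  diag_mean : ∫ ω, ζ ω ∂P = 0
  diag_var : ∫⁻ ω, ENNReal.ofReal ((ζ ω) ^ 2) ∂P < ⊤

/-- `Y` is a real symmetric Wigner matrix with atom variable `ξ`. -/
structure IsWigner {Ω : Type*} [MeasurableSpace Ω] (P : Measure Ω) {N : ℕ}
    (ξ : Ω → ℝ) (Y : Ω → Matrix (Fin N) (Fin N) ℝ) : Prop where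
  symm : ∀ ω, (Y ω).IsSymm
  meas : ∀ i j, Measurable fun ω => Y ω i j
  indep : iIndepFun
    (fun (p : {p : Fin N × Fin N // p.1 ≤ p.2}) => fun ω => Y ω p.1.1 p.1.2) P
  dist : ∀ i j : Fin N, i ≤ j → Measure.map (fun ω => Y ω i j) P = Measure.map ξ P

/-- Squared Hilbert–Schmidt norm of a real matrix. -/
def hsSq {k l : Type*} [Fintype k] [Fintype l] (M : Matrix k l ℝ) : ℝ :=
  ∑ i, ∑ j, (M i j) ^ 2

/-- The L2 operator norm of a complex square matrix. -/
def opNorm {n : Type*} [Fintype n] [DecidableEq n] (M : Matrix n n ℂ) : ℝ :=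
  ‖Matrix.toEuclideanCLM (𝕜 := ℂ) M‖

/-- The least singular value of a complex square matrix. -/
def leastSV {n : Type*} [Fintype n] [DecidableEq n] (M : Matrix n n ℂ) : ℝ :=
  ⨅ x : {x : EuclideanSpace ℂ n // ‖x‖ = 1}, ‖(Matrix.toEuclideanCLM (𝕜 := ℂ) M) x.1‖

/-- The Hermitization (Hermitian dilation) of `X`, viewed as a `2m × 2m` array of
`N × N` blocks. -/
def hermDil {m N : ℕ} (X : Matrix (Fin m × Fin N) (Fin m × Fin N) ℂ) :
    Matrix ((Fin m ⊕ Fin m) × Fin N) ((Fin m ⊕ Fin m) × Fin N) ℂ :=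
  fun p q =>
    match p, q with
    | (Sum.inl a, i), (Sum.inr b, j) => X (a, i) (b, j)
    | (Sum.inr a, i), (Sum.inl b, j) => star (X (b, j) (a, i))
    | _, _ => 0

/-- The `2m × 2m` matrix `q = [[η I_m, z I_m], [z̄ I_m, η I_m]]`. -/
def qmat (m : ℕ) (z η : ℂ) : Matrix (Fin m ⊕ Fin m) (Fin m ⊕ Fin m) ℂ :=
  Matrix.fromBlocks (η • 1) (z • 1) ((starRingEnd ℂ z) • 1) (η • 1)

/-- Kronecker product `q ⊗ I_N`. -/
def kron {m N : ℕ} (q : Matrix (Fin m ⊕ Fin m) (Fin m ⊕ Fin m) ℂ) :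
    Matrix ((Fin m ⊕ Fin m) × Fin N) ((Fin m ⊕ Fin m) × Fin N) ℂ :=
  fun p r => if p.2 = r.2 then q p.1 r.1 else 0

/-- Partial (normalized block) trace of a `2mN × 2mN` matrix, a `2m × 2m` matrix. -/
def blockTr {m N : ℕ}
    (R : Matrix ((Fin m ⊕ Fin m) × Fin N) ((Fin m ⊕ Fin m) × Fin N) ℂ) :
    Matrix (Fin m ⊕ Fin m) (Fin m ⊕ Fin m) ℂ :=
  fun a b => (N : ℂ)⁻¹ * ∑ i : Fin N, R (a, i) (b, i)

/-- The resolvent `(H - q ⊗ I_N)⁻¹` of the Hermitization of `X`. -/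
def resolvent {m N : ℕ} (X : Matrix (Fin m × Fin N) (Fin m × Fin N) ℂ)
    (q : Matrix (Fin m ⊕ Fin m) (Fin m ⊕ Fin m) ℂ) :
    Matrix ((Fin m ⊕ Fin m) × Fin N) ((Fin m ⊕ Fin m) × Fin N) ℂ :=
  (hermDil X - kron q)⁻¹

/-- The matrix-valued Stieltjes transform `Γ(q)`. -/
def GammaMat {m N : ℕ} (X : Matrix (Fin m × Fin N) (Fin m × Fin N) ℂ)
    (q : Matrix (Fin m ⊕ Fin m) (Fin m ⊕ Fin m) ℂ) :
    Matrix (Fin m ⊕ Fin m) (Fin m ⊕ Fin m) ℂ :=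
  blockTr (resolvent X q)

/-- `X_N(ω)`: the normalized complexified cyclic block matrix of the `Y_{N,k}`. -/
def XN {Ω : Type*} {m N : ℕ} (Y : Fin m → Ω → Matrix (Fin N) (Fin N) ℝ) (ω : Ω) :
    Matrix (Fin m × Fin N) (Fin m × Fin N) ℂ :=
  matC (((N : ℝ) ^ (-(1 : ℝ) / 2)) • cyclicBlock (fun k => Y k ω))

/-- Entrywise expectation of a random matrix. -/
def expMat {Ω : Type*} [MeasurableSpace Ω] (P : Measure Ω) {k l : Type*}
    (F : Ω → Matrix k l ℂ) : Matrix k l ℂ :=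
  fun a b => ∫ ω, F ω a b ∂P

/-- Zero out the `k`-th row and `k`-th column. -/
def zeroRC {α : Type*} [Zero α] {N : ℕ} (k : Fin N) (M : Matrix (Fin N) (Fin N) α) :
    Matrix (Fin N) (Fin N) α :=
  fun i j => if i = k ∨ j = k then 0 else M i j

/-- Truncation of a real random variable at level `c`, recentered. -/
def trunc {Ω : Type*} [MeasurableSpace Ω] (P : Measure Ω) (f : Ω → ℝ) (c : ℝ) : Ω → ℝ :=
  fun ω => (if |f ω| ≤ c then f ω else 0) - ∫ ω', (if |f ω'| ≤ c then f ω' else 0) ∂P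

/-- Truncated and renormalized random variable. -/
def truncNorm {Ω : Type*} [MeasurableSpace Ω] (P : Measure Ω) (f : Ω → ℝ) (c : ℝ) : Ω → ℝ :=
  fun ω => trunc P f c ω / Real.sqrt (variance (trunc P f c) P)

/-- The truncated matrix `Ŷ`: zero diagonal, truncated renormalized off-diagonal entries. -/
def truncMatrix {Ω : Type*} [MeasurableSpace Ω] (P : Measure Ω) {N : ℕ}
    (Y : Ω → Matrix (Fin N) (Fin N) ℝ) (c : ℝ) (ω : Ω) : Matrix (Fin N) (Fin N) ℝ :=
  fun i j => if i = j then 0 else truncNorm P (fun ω' => Y ω' i j) c ω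

/-- Empirical spectral distribution function (for Hermitian matrices: counts eigenvalues
of real part at most `x`). -/
def esdF {n : Type*} [Fintype n] [DecidableEq n] (M : Matrix n n ℂ) (x : ℝ) : ℝ :=
  ((M.charpoly.roots.filter (fun lam => lam.re ≤ x)).card : ℝ) / Fintype.card n

/-- Levy distance between two distribution functions. -/
def levyDist (F G : ℝ → ℝ) : ℝ :=
  sInf {ε : ℝ | 0 < ε ∧ ∀ x, F (x - ε) - ε ≤ G x ∧ G x ≤ F (x + ε) + ε}

/-- Singular values of a complex square matrix. -/
def svals {n : Type*} [Fintype n] [DecidableEq n] (M : Matrix n n ℂ) (i : n) : ℝ :=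
  Real.sqrt ((Matrix.isHermitian_conjTranspose_mul_self M).eigenvalues i)

/-- Distribution function `x ↦ ν_M((-∞, x))` of the symmetrized empirical singular value
measure. -/
def nuCDF {n : Type*} [Fintype n] [DecidableEq n] (M : Matrix n n ℂ) (x : ℝ) : ℝ :=
  (((Finset.univ.filter fun i => svals M i < x).card
      + (Finset.univ.filter fun i => -svals M i < x).card : ℕ) : ℝ)
    / (2 * Fintype.card n)

/-- The imaginary part of a complex square matrix. -/
def imPart {n : Type*} (q : Matrix n n ℂ) : Matrix n n ℂ :=
  ((2 * Complex.I)⁻¹ : ℂ) • (q - qᴴ)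

end Paper

/-!
`Z` maps block row `k` to block column `k + 1`, so `Z ^ m` is block diagonal, its `k`-th
diagonal block being the rotated product `M k * M (k + 1) * ⋯ * M (k - 1)`. Each rotation is
`A * B` for a factorisation `M 0 ⋯ M (m - 1) = B * A`, and `A * B`, `B * A` have the same
characteristic polynomial; so `Z ^ m` has `m` diagonal blocks, all with the characteristic
polynomial of `M 0 ⋯ M (m - 1)`.
-/

open Matrix Polynomial

namespace Matrix

variable {o n R : Type*} [Fintype o] [DecidableEq o] [Fintype n] [DecidableEq n] [CommRing R]

theorem charmatrix_blockDiagonal (P : o → Matrix n n R) :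
    charmatrix (blockDiagonal P) = blockDiagonal fun k => charmatrix (P k) := by
  ext ⟨i, k⟩ ⟨j, l⟩
  simp only [charmatrix_apply, blockDiagonal_apply, diagonal_apply, Prod.ext_iff]
  by_cases hkl : k = l <;> by_cases hij : i = j <;> simp [hkl, hij]

theorem charpoly_blockDiagonal (P : o → Matrix n n R) :
    (blockDiagonal P).charpoly = ∏ k, (P k).charpoly := by
  rw [charpoly, charmatrix_blockDiagonal, det_blockDiagonal]
  rfl

end Matrix

namespace Paper

open Fin.NatCast

variable {m N : ℕ} {n R : Type*} [Fintype n] [DecidableEq n]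

section Cyclic

variable [NeZero m]

/-- `cyclicProd M k t = M k * M (k + 1) * ⋯ * M (k + t - 1)`, indices taken modulo `m`. -/
def cyclicProd [Semiring R] (M : Fin m → Matrix n n R) (k : Fin m) : ℕ → Matrix n n R
  | 0 => 1
  | t + 1 => cyclicProd M k t * M (k + t)

theorem cyclicProd_add [Semiring R] (M : Fin m → Matrix n n R) (k : Fin m) (s t : ℕ) :
    cyclicProd M k (s + t) = cyclicProd M k s * cyclicProd M (k + s) t := by
  induction t with
  | zero => exact (mul_one _).symm
  | succ t ih =>
    rw [← add_assoc, cyclicProd, ih, cyclicProd, mul_assoc, Nat.cast_add, add_assoc]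

theorem cyclicProd_zero_of_le [Semiring R] (M : Fin m → Matrix n n R) {t : ℕ} (ht : t ≤ m) :
    cyclicProd M 0 t = ((List.ofFn M).take t).prod := by
  induction t with
  | zero => rfl
  | succ t ih =>
    rw [cyclicProd, ih (by omega), List.prod_take_succ _ _ (by simpa using ht),
      List.getElem_ofFn, zero_add]
    congr 2
    exact Fin.ext (Fin.val_cast_of_lt (by omega))

theorem cyclicProd_zero_self [Ring R] (M : Fin m → Matrix n n R) :
    cyclicProd M 0 m = ordProd M := by
  rw [cyclicProd_zero_of_le M le_rfl, ordProd, List.take_of_length_le (by simp)]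

theorem charpoly_cyclicProd_self [CommRing R] (M : Fin m → Matrix n n R) (k : Fin m) :
    (cyclicProd M k m).charpoly = (ordProd M).charpoly := by
  have hk : k + ((m - k.val : ℕ) : Fin m) = 0 := by
    ext
    rw [Fin.val_add, Fin.val_natCast, Fin.val_zero, Nat.add_mod_mod,
      Nat.add_sub_cancel' k.isLt.le, Nat.mod_self]
  have hm : m = (m - k.val) + k.val := (Nat.sub_add_cancel k.isLt.le).symm
  have rotated : cyclicProd M k m = cyclicProd M k (m - k) * cyclicProd M 0 k := by
    rw [← hk, ← cyclicProd_add, ← hm]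
  have unrotated : ordProd M = cyclicProd M 0 k * cyclicProd M k (m - k) := by
    have := cyclicProd_add M 0 k (m - k)
    rwa [zero_add, Fin.cast_val_eq_self, Nat.add_sub_cancel' k.isLt.le, cyclicProd_zero_self]
      at this
  rw [rotated, unrotated, charpoly_mul_comm]

theorem cyclicBlock_apply {α : Type*} [Zero α] (M : Fin m → Matrix (Fin N) (Fin N) α)
    (k l : Fin m) (i j : Fin N) :
    cyclicBlock M (k, i) (l, j) = if l = k + 1 then M k i j else 0 := by
  have : (l : ℕ) = ((k : ℕ) + 1) % m ↔ l = k + 1 := by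
    rw [Fin.ext_iff, Fin.val_add, Fin.val_one', Nat.add_mod_mod]
  exact if_congr this rfl rfl

theorem cyclicBlock_pow_apply [Semiring R] (M : Fin m → Matrix (Fin N) (Fin N) R) (t : ℕ)
    (k l : Fin m) (i j : Fin N) :
    (cyclicBlock M ^ t) (k, i) (l, j) = if l = k + t then cyclicProd M k t i j else 0 := by
  induction t generalizing l j with
  | zero =>
    by_cases h : l = k
    · simp [h, one_apply, cyclicProd]
    · simp [h, one_apply, Ne.symm h]
  | succ t ih =>
    rw [pow_succ, mul_apply, Fintype.sum_prod_type]
    simp only [ih, cyclicBlock_apply, ite_mul, mul_ite, zero_mul, mul_zero,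
      Finset.sum_ite_irrel, Finset.sum_const_zero]
    rw [Fintype.sum_eq_single (k + t) fun c hc => by simp [hc]]
    simp [cyclicProd, mul_apply, add_assoc]

theorem cyclicBlock_pow_self [Semiring R] (M : Fin m → Matrix (Fin N) (Fin N) R) :
    cyclicBlock M ^ m = reindex (.prodComm _ _) (.prodComm _ _)
      (blockDiagonal fun k => cyclicProd M k m) := by
  ext ⟨k, i⟩ ⟨l, j⟩
  rw [cyclicBlock_pow_apply, Fin.natCast_self, add_zero]
  simp [blockDiagonal_apply, eq_comm]

end Cyclic

theorem charpoly_cyclicBlock_pow [CommRing R] (M : Fin m → Matrix (Fin N) (Fin N) R) :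
    (cyclicBlock M ^ m).charpoly = (ordProd M).charpoly ^ m := by
  obtain rfl | hm := m.eq_zero_or_pos
  · simp
  have : NeZero m := ⟨hm.ne'⟩
  rw [cyclicBlock_pow_self, charpoly_reindex, charpoly_blockDiagonal,
    Fintype.prod_congr _ _ (charpoly_cyclicProd_self M), Fin.prod_const]

end Paper

theorem cyclic_block_power_det_general (m N : ℕ)
    (M : Fin m → Matrix (Fin N) (Fin N) ℂ) :
    (∀ x : ℂ,
      Matrix.det (x • (1 : Matrix (Fin m × Fin N) (Fin m × Fin N) ℂ) - (Paper.cyclicBlock M) ^ m)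
        = (Matrix.det (x • (1 : Matrix (Fin N) (Fin N) ℂ) - Paper.ordProd M)) ^ m) ∧
    ((Paper.cyclicBlock M ^ m).charpoly.roots = m • (Paper.ordProd M).charpoly.roots) := by
  refine ⟨fun x => ?_, ?_⟩
  · simp only [smul_one_eq_diagonal, ← scalar_apply, ← eval_charpoly,
      Paper.charpoly_cyclicBlock_pow, eval_pow]
  · rw [Paper.charpoly_cyclicBlock_pow, roots_pow]

/-- The `m`-th power of the cyclic block matrix has characteristic
polynomial the `m`-th power of that of the product, so its eigenvalue multiset is `m` copies
of the eigenvalue multiset of the product. -/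
theorem cyclic_block_power_det (m N : ℕ) (hm : 1 ≤ m)
    (M : Fin m → Matrix (Fin N) (Fin N) ℂ) :
    (∀ x : ℂ,
      Matrix.det (x • (1 : Matrix (Fin m × Fin N) (Fin m × Fin N) ℂ) - (Paper.cyclicBlock M) ^ m)
        = (Matrix.det (x • (1 : Matrix (Fin N) (Fin N) ℂ) - Paper.ordProd M)) ^ m) ∧
    ((Paper.cyclicBlock M ^ m).charpoly.roots = m • (Paper.ordProd M).charpoly.roots) :=
  cyclic_block_power_det_general m N M
end
end

section
/- Let m ≥ 1, let ρ₁, …, ρ_{2m} ∈ ℝ, and let σ' : {1, …, 2m} → {1, …, 2m} be a map with σ'(a) ∉ {a, a−m, a+m} for every a. Define the linear operator Σ on 2m×2m complex matrices by Σ(A)_{ab} := A_{σ'(a)σ'(a)} δ_{ab} + ρ_a A_{σ'(a)a} δ_{σ'(a)b}. Let z, η, a ∈ ℂ satisfy (a+η)² ≠ |z|² and a = (a+η)/(|z|² − (a+η)²). Set q := [[η I_m, z I_m],[z̄ I_m, η I_m]] and Γ := [[a I_m, z((a+η)² − |z|²)^{-1} I_m],[z̄((a+η)² − |z|²)^{-1}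 I_m, a I_m]]. Then Σ(Γ) = a I_{2m}, the matrix q + Σ(Γ) is invertible, and Γ = −(q + Σ(Γ))^{-1} = −[[(a+η) I_m, z I_m],[z̄ I_m, (a+η) I_m]]^{-1}. -/
open MeasureTheory ProbabilityTheory Filter Topology Matrix
open scoped ENNReal NNReal

noncomputable section

/-!
Since `Γ` has scalar `m × m` blocks, its only nonzero entries sit on the diagonal and at the
positions `(i, swap i)`; `σ'` avoids both, so `Σ` only sees the constant diagonal
`a` of `Γ` and `Σ(Γ) = a I`. Matrices with scalar blocks multiply like `2 × 2` matrices, so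
`q + a I = [[w I, z I], [z̄ I, w I]]` with `w = a + η` is inverted by the adjugate formula, and
the fixed point equation says exactly that `a = -w / (w² - |z|²)` is the diagonal entry of
`-(q + a I)⁻¹`.
-/

namespace Matrix

section ScalarBlocks

variable {n R : Type*} [DecidableEq n]

def scalarBlocks [Semiring R] (p q r s : R) : Matrix (n ⊕ n) (n ⊕ n) R :=
  fromBlocks (p • 1) (q • 1) (r • 1) (s • 1)

theorem scalarBlocks_apply_self [Semiring R] (p q r : R) (i : n ⊕ n) :
    scalarBlocks p q r p i i = p := by
  rcases i with i | i <;> simp [scalarBlocks]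

theorem scalarBlocks_apply_of_ne [Semiring R] (p q r s : R) {i j : n ⊕ n}
    (h : i ≠ j) (h' : i ≠ j.swap) : scalarBlocks p q r s i j = 0 := by
  rcases i with i | i <;> rcases j with j | j <;> simp_all [scalarBlocks]

theorem smul_one_eq_scalarBlocks [Semiring R] (a : R) :
    (a • 1 : Matrix (n ⊕ n) (n ⊕ n) R) = scalarBlocks a 0 0 a := by
  rw [scalarBlocks, ← fromBlocks_one, fromBlocks_smul, smul_zero, zero_smul]

theorem scalarBlocks_add [Semiring R] (p q r s p' q' r' s' : R) :
    (scalarBlocks p q r s : Matrix (n ⊕ n) (n ⊕ n) R) + scalarBlocks p' q' r' s' =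
      scalarBlocks (p + p') (q + q') (r + r') (s + s') := by
  simp only [scalarBlocks, fromBlocks_add, add_smul]

theorem smul_scalarBlocks [Semiring R] (c p q r s : R) :
    c • (scalarBlocks p q r s : Matrix (n ⊕ n) (n ⊕ n) R) =
      scalarBlocks (c * p) (c * q) (c * r) (c * s) := by
  simp only [scalarBlocks, fromBlocks_smul, smul_smul]

variable [Fintype n]

theorem scalarBlocks_mul [CommSemiring R] (p q r s p' q' r' s' : R) :
    (scalarBlocks p q r s : Matrix (n ⊕ n) (n ⊕ n) R) * scalarBlocks p' q' r' s' =
      scalarBlocks (p * p' + q * r') (p * q' + q * s') (r * p' + s * r') (r * q' + s * s') := by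
  simp only [scalarBlocks, fromBlocks_multiply, smul_mul_smul_comm, one_mul, add_smul]

theorem scalarBlocks_mul_adjugate [CommRing R] (p q r s : R) :
    (scalarBlocks p q r s : Matrix (n ⊕ n) (n ⊕ n) R) * scalarBlocks s (-q) (-r) p =
      (p * s - q * r) • 1 := by
  rw [scalarBlocks_mul, smul_one_eq_scalarBlocks]
  congr 1 <;> ring

theorem scalarBlocks_mul_inv_det_smul_adjugate [Field R] {p q r s : R}
    (h : p * s - q * r ≠ 0) :
    (scalarBlocks p q r s : Matrix (n ⊕ n) (n ⊕ n) R) *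
        ((p * s - q * r)⁻¹ • scalarBlocks s (-q) (-r) p) = 1 := by
  rw [mul_smul_comm, scalarBlocks_mul_adjugate, smul_smul, inv_mul_cancel₀ h, one_smul]

end ScalarBlocks

end Matrix

/-- The paper's operator `Σ`. -/
def sigmaMap {ι : Type*} [DecidableEq ι] (σ' : ι → ι) (ρ : ι → ℝ) (A : Matrix ι ι ℂ) :
    Matrix ι ι ℂ :=
  Matrix.of fun a' b => (if a' = b then A (σ' a') (σ' a') else 0)
    + (if σ' a' = b then (ρ a' : ℂ) * A (σ' a') a' else 0)

theorem sigmaMap_eq_smul_one {ι : Type*} [DecidableEq ι] (σ' : ι → ι) (ρ : ι → ℝ)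
    {A : Matrix ι ι ℂ} {c : ℂ} (hdiag : ∀ i, A (σ' i) (σ' i) = c)
    (hoff : ∀ i, A (σ' i) i = 0) : sigmaMap σ' ρ A = c • 1 := by
  ext i j
  simp [sigmaMap, one_apply, hdiag, hoff]

theorem fixed_point_solution_general (m : ℕ) (ρ : Fin m ⊕ Fin m → ℝ)
    (σ' : Fin m ⊕ Fin m → Fin m ⊕ Fin m)
    (hσ : ∀ a, σ' a ≠ a ∧
      σ' a ≠ Sum.elim (fun x : Fin m => (Sum.inr x : Fin m ⊕ Fin m)) (fun x => Sum.inl x) a)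
    (z η a : ℂ) (hne : (a + η) ^ 2 ≠ z * starRingEnd ℂ z)
    (hfix : a = (a + η) / (z * starRingEnd ℂ z - (a + η) ^ 2)) :
    let Sig : Matrix (Fin m ⊕ Fin m) (Fin m ⊕ Fin m) ℂ →
        Matrix (Fin m ⊕ Fin m) (Fin m ⊕ Fin m) ℂ :=
      fun A => Matrix.of fun a' b => (if a' = b then A (σ' a') (σ' a') else 0)
        + (if σ' a' = b then (ρ a' : ℂ) * A (σ' a') a' else 0)
    let q : Matrix (Fin m ⊕ Fin m) (Fin m ⊕ Fin m) ℂ :=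
      Matrix.fromBlocks (η • 1) (z • 1) ((starRingEnd ℂ z) • 1) (η • 1)
    let Γ : Matrix (Fin m ⊕ Fin m) (Fin m ⊕ Fin m) ℂ :=
      Matrix.fromBlocks (a • 1) ((z * ((a + η) ^ 2 - z * starRingEnd ℂ z)⁻¹) • 1)
        (((starRingEnd ℂ z) * ((a + η) ^ 2 - z * starRingEnd ℂ z)⁻¹) • 1) (a • 1)
    Sig Γ = a • 1 ∧ IsUnit (q + Sig Γ) ∧ Γ = -(q + Sig Γ)⁻¹ ∧
      Γ = -(Matrix.fromBlocks ((a + η) • 1) (z • 1) ((starRingEnd ℂ z) • 1) ((a + η) • 1))⁻¹ := by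
  intro Sig q Γ
  set w := a + η
  set z' := starRingEnd ℂ z
  have hdet : w * w - z * z' ≠ 0 := by rw [← sq]; exact sub_ne_zero.mpr hne
  have hSig : Sig Γ = a • 1 :=
    sigmaMap_eq_smul_one σ' ρ (fun i => scalarBlocks_apply_self _ _ _ _)
      (fun i => scalarBlocks_apply_of_ne _ _ _ _ (hσ i).1 (hσ i).2)
  have hsum : q + Sig Γ = scalarBlocks w z z' w := by
    rw [hSig, smul_one_eq_scalarBlocks]
    exact (scalarBlocks_add _ _ _ _ _ _ _ _).trans (by congr 1 <;> ring)
  have hinv := scalarBlocks_mul_inv_det_smul_adjugate (n := Fin m) hdet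
  have hΓ : Γ = -(scalarBlocks w z z' w)⁻¹ := by
    rw [inv_eq_right_inv hinv, ← neg_smul, smul_scalarBlocks]
    have ha : a = -(w * w - z * z')⁻¹ * w := by
      rw [hfix, div_eq_inv_mul, ← neg_sub, inv_neg, sq]
    change scalarBlocks a (z * (w ^ 2 - z * z')⁻¹) (z' * (w ^ 2 - z * z')⁻¹) a = _
    rw [ha]
    congr 1 <;> ring
  refine ⟨hSig, ?_, hsum ▸ hΓ, hΓ⟩
  rw [hsum]
  exact (isUnit_iff_isUnit_det _).mpr (isUnit_det_of_right_inverse hinv)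

/-- The explicit solution of the matrix-valued fixed point equation. -/
theorem fixed_point_solution (m : ℕ) (hm : 1 ≤ m) (ρ : Fin m ⊕ Fin m → ℝ)
    (σ' : Fin m ⊕ Fin m → Fin m ⊕ Fin m)
    (hσ : ∀ a, σ' a ≠ a ∧
      σ' a ≠ Sum.elim (fun x : Fin m => (Sum.inr x : Fin m ⊕ Fin m)) (fun x => Sum.inl x) a)
    (z η a : ℂ) (hne : (a + η) ^ 2 ≠ z * starRingEnd ℂ z)
    (hfix : a = (a + η) / (z * starRingEnd ℂ z - (a + η) ^ 2)) :
    let Sig : Matrix (Fin m ⊕ Fin m) (Fin m ⊕ Fin m) ℂ →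
        Matrix (Fin m ⊕ Fin m) (Fin m ⊕ Fin m) ℂ :=
      fun A => Matrix.of fun a' b => (if a' = b then A (σ' a') (σ' a') else 0)
        + (if σ' a' = b then (ρ a' : ℂ) * A (σ' a') a' else 0)
    let q : Matrix (Fin m ⊕ Fin m) (Fin m ⊕ Fin m) ℂ :=
      Matrix.fromBlocks (η • 1) (z • 1) ((starRingEnd ℂ z) • 1) (η • 1)
    let Γ : Matrix (Fin m ⊕ Fin m) (Fin m ⊕ Fin m) ℂ :=
      Matrix.fromBlocks (a • 1) ((z * ((a + η) ^ 2 - z * starRingEnd ℂ z)⁻¹) • 1)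
        (((starRingEnd ℂ z) * ((a + η) ^ 2 - z * starRingEnd ℂ z)⁻¹) • 1) (a • 1)
    Sig Γ = a • 1 ∧ IsUnit (q + Sig Γ) ∧ Γ = -(q + Sig Γ)⁻¹ ∧
      Γ = -(Matrix.fromBlocks ((a + η) • 1) (z • 1) ((starRingEnd ℂ z) • 1) ((a + η) • 1))⁻¹ :=
  fixed_point_solution_general m ρ σ' hσ z η a hne hfix
end
end
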